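/- For every positive integer k and complex numbers x, q with |q| < 1, the generating function over the set P_{2k} of partitions whose largest part is exactly 2k satisfies: Σ_{λ ∈ P_{2k}} x^{pi(λ)} · q^{|λ|} = q^{2k} · Σ_{0 ≤ j ≤ k} x^{2j} · q^{binom(2j,2)} / ((q;q)_{2j} · (q²;q²)_{k−j}), where pi(λ) is the parity index of the nondecreasing sequence of the parts of λ. -/

import Mathlib

/-!
Let `c(m, i)` be the generating function `∑ q ^ |λ|` over the partitions `λ` with parts `≤ m`
and parity index `i`. The parity index of a partition has the parity of its largest part, so
adding at least one part `m + 1` to a partition with parts `≤ m` changes its parity index `p`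
into `p + (p + m + 1) mod 2`. Summing the geometric series in the multiplicity of `m + 1` gives
`c(m+1, i) = c(m, i) + [i ≡ m + 1] q^(m+1) / (1 - q^(m+1)) (c(m, i) + c(m, i - 1))`,
and induction on `m` yields `c(m, i) = q^binom(i+1, 2) / ((q;q)_i (q²;q²)_⌊(m-i)/2⌋)` for
`i ≤ m`. The partitions with largest part exactly `2k` contribute `c(2k, i) - c(2k-1, i)`, which
vanishes for odd `i` and is `q^(2k) q^binom(2j, 2) / ((q;q)_(2j) (q²;q²)_(k-j))` for `i = 2j`.
-/

open scoped BigOperators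

namespace SolPaper

/-- The finite q-Pochhammer symbol `(a;q)_n = (1-a)(1-aq)⋯(1-aq^{n-1})`. -/
noncomputable def qPoch (a q : ℂ) (n : ℕ) : ℂ := ∏ i ∈ Finset.range n, (1 - a * q ^ i)

/-- The infinite q-Pochhammer symbol `(a;q)_∞`. -/
noncomputable def qPochInf (a q : ℂ) : ℂ := ∏' i : ℕ, (1 - a * q ^ i)

/-- `sol p` : the number of maximal runs of consecutive integers among the parts of `p`
that have odd length.  A maximal run is an interval `[a,b]` all of whose members are
parts, with `a-1` and `b+1` not parts; its length `b-a+1` is odd iff `b-a` is even. -/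
def sol {n : ℕ} (p : n.Partition) : ℕ :=
  ((p.parts.toFinset ×ˢ p.parts.toFinset).filter fun ab =>
      ab.1 ≤ ab.2 ∧ (∀ c ∈ Finset.Icc ab.1 ab.2, c ∈ p.parts) ∧
      (ab.1 - 1) ∉ p.parts ∧ (ab.2 + 1) ∉ p.parts ∧ Even (ab.2 - ab.1)).card

/-- The `k`-measure of a partition: the length of the longest subsequence of its parts
in which any two members differ by at least `k`. -/
noncomputable def kMeasure (k : ℕ) {n : ℕ} (p : n.Partition) : ℕ :=
  sSup {m : ℕ | ∃ l : List ℕ, l.Sublist (Multiset.sort p.parts (· ≤ ·)) ∧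
    l.Pairwise (fun a b => (k : ℤ) ≤ |(a : ℤ) - (b : ℤ)|) ∧ l.length = m}

/-- The 2-modular Durfee side: the largest `k` such that the 2-modular diagram contains a
`k × k` square, i.e. such that at least `k` parts are `≥ 2k-1` (row `i` of the 2-modular
diagram has `⌈λ_i/2⌉` cells). -/
noncomputable def Dur2 {n : ℕ} (p : n.Partition) : ℕ :=
  sSup {k : ℕ | k ≤ (p.parts.filter fun a => 2 * k - 1 ≤ a).card}

/-- Type I: with `k = Dur2 p`, the `k`-th largest part satisfies `λ_k > 2k-1`,
equivalently at least `k` parts exceed `2k-1`. -/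
def TypeI {n : ℕ} (p : n.Partition) : Prop :=
  Dur2 p ≤ (p.parts.filter fun a => 2 * Dur2 p - 1 < a).card

/-- Type II: with `k = Dur2 p`, the `k`-th largest part satisfies `λ_k = 2k-1`,
equivalently at least `k` parts are `≥ 2k-1` but fewer than `k` parts exceed `2k-1`. -/
def TypeII {n : ℕ} (p : n.Partition) : Prop :=
  Dur2 p ≤ (p.parts.filter fun a => 2 * Dur2 p - 1 ≤ a).card ∧
  (p.parts.filter fun a => 2 * Dur2 p - 1 < a).card < Dur2 p

open Classical in
/-- The 2-modular sub-Durfee side.  With `k = Dur2 p` and `β` the subpartition below the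
2-modular Durfee square (the parts of index `> k`), the number of parts of `β` that are
`≥ v` (for `v > λ_{k+1}`-irrelevant ranges handled by truncated subtraction) is
`(number of parts of p ≥ v) - k`.  For type I it is the largest `m` with at least `m`
parts of `β` being `≥ 2m-1` (a Durfee `m × m` square in `[β]₂`); for type II the largest
`m` with at least `m` parts of `β` being `≥ 2m+1` (an `m × (m+1)` rectangle in `[β]₂`). -/
noncomputable def dur2 {n : ℕ} (p : n.Partition) : ℕ :=
  if TypeI p then
    sSup {m : ℕ | m ≤ (p.parts.filter fun a => 2 * m - 1 ≤ a).card - Dur2 p}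
  else
    sSup {m : ℕ | m ≤ (p.parts.filter fun a => 2 * m + 1 ≤ a).card - Dur2 p}

/-- The multiset of parts lying below the 2-modular Durfee square, i.e. the smallest
`ℓ(p) - Dur2 p` parts. -/
noncomputable def belowParts {n : ℕ} (p : n.Partition) : Multiset ℕ :=
  ↑((Multiset.sort p.parts (· ≤ ·)).take (p.parts.card - Dur2 p))

/-- `alphaStar p` : the parts of the conjugate of the 2-modular diagram of the
subpartition `α` to the right of the 2-modular Durfee square (drawn with right-border
1's, so `α_i = λ_i - (2k-1)` for `i ≤ k`).  Column `j ≥ 1` of `[α]₂` contributes the part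
`2 · #{i : λ_i ≥ 2k-1+2j}`. -/
noncomputable def alphaStar {n : ℕ} (p : n.Partition) : Multiset ℕ :=
  Multiset.filter (fun v => 0 < v)
    ((Finset.Icc 1 n).val.map fun j =>
      2 * (p.parts.filter fun a => 2 * Dur2 p - 1 + 2 * j ≤ a).card)

/-- Number of parity switches between adjacent entries of a list. -/
def parityChanges : List ℕ → ℕ
  | a :: b :: rest => (if a % 2 = b % 2 then 0 else 1) + parityChanges (b :: rest)
  | _ => 0

/-- The parity index of a finite sequence `s`: the number of parity switches in
`0, s₁, …, s_l` read from left to right. -/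
def parityIndex (s : List ℕ) : ℕ := parityChanges (0 :: s)

/-- The parity index of a partition: the parity index of its parts listed in
nondecreasing order. -/
def partPi {n : ℕ} (p : n.Partition) : ℕ :=
  parityIndex (Multiset.sort p.parts (· ≤ ·))

open Classical in
/-- The alternating index of a partition into odd parts: the parity index of the
nondecreasing sequence `η̃` formed by the parts of `η = α* ∪ β` together with one extra
part equal to `2k` (type I) or `2k-1` (type II), where `k = Dur2 p`. -/
noncomputable def altIdx {n : ℕ} (p : n.Partition) : ℕ :=
  parityIndex (Multiset.sort
    (alphaStar p + belowParts p +
      {if TypeI p then 2 * Dur2 p else 2 * Dur2 p - 1}) (· ≤ ·))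

/-- `A1 n k m`: the number of partitions of `n` into odd parts of type I with 2-modular
Durfee side `k` and 2-modular sub-Durfee side `m`. -/
noncomputable def A1 (n k m : ℕ) : ℕ :=
  Nat.card {p : n.Partition // (∀ a ∈ p.parts, Odd a) ∧ TypeI p ∧ Dur2 p = k ∧ dur2 p = m}

/-- `A2 n k m`: the number of partitions of `n` into odd parts of type II with 2-modular
Durfee side `k` and 2-modular sub-Durfee side `m`. -/
noncomputable def A2 (n k m : ℕ) : ℕ :=
  Nat.card {p : n.Partition // (∀ a ∈ p.parts, Odd a) ∧ TypeII p ∧ Dur2 p = k ∧ dur2 p = m}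

/-- `B n k m`: the number of partitions of `n` into odd parts with 2-modular Durfee side
`k` and alternating index `m`. -/
noncomputable def B (n k m : ℕ) : ℕ :=
  Nat.card {p : n.Partition // (∀ a ∈ p.parts, Odd a) ∧ Dur2 p = k ∧ altIdx p = m}

/-- `D n k m`: the number of partitions of `n` into `k` distinct parts with exactly `m`
maximal sequences of consecutive integers of odd length. -/
noncomputable def D (n k m : ℕ) : ℕ :=
  Nat.card {p : n.Partition // p.parts.Nodup ∧ p.parts.card = k ∧ sol p = m}

theorem parityChanges_cons_concat :
    ∀ (a : ℕ) (l : List ℕ) (v : ℕ), parityChanges (a :: l ++ [v]) =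
      parityChanges (a :: l) + (parityChanges (a :: l) + a + v) % 2
  | a, [], v => by
    show (if a % 2 = v % 2 then 0 else 1) + 0 = 0 + (0 + a + v) % 2
    split <;> omega
  | a, b :: l, v => by
    have ih := parityChanges_cons_concat b l v
    simp only [List.cons_append] at ih ⊢
    simp only [parityChanges] at ih ⊢
    split <;> omega

theorem parityChanges_cons_append_replicate (a : ℕ) (l : List ℕ) (v : ℕ) :
    ∀ c, parityChanges (a :: l ++ List.replicate (c + 1) v) =
      parityChanges (a :: l) + (parityChanges (a :: l) + a + v) % 2
  | 0 => parityChanges_cons_concat a l v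
  | c + 1 => by
    have ih := parityChanges_cons_append_replicate a l v c
    rw [List.replicate_succ', ← List.append_assoc, List.cons_append,
      parityChanges_cons_concat, ← List.cons_append, ih]
    omega

theorem parityChanges_le_of_pairwise (m : ℕ) :
    ∀ (a : ℕ) (l : List ℕ), (a :: l).Pairwise (· ≤ ·) → (∀ b ∈ l, b ≤ m) →
      parityChanges (a :: l) ≤ m - a
  | a, [], _, _ => Nat.zero_le _
  | a, b :: l, hs, hm => by
    have hab : a ≤ b := List.rel_of_pairwise_cons hs List.mem_cons_self
    have ih := parityChanges_le_of_pairwise m b l hs.of_cons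
      fun c hc => hm c (List.mem_cons_of_mem b hc)
    have hb := hm b List.mem_cons_self
    simp only [parityChanges]
    split <;> omega

def multisetParityIndex (s : Multiset ℕ) : ℕ := parityIndex (s.sort (· ≤ ·))

theorem partPi_eq {n : ℕ} (p : n.Partition) : partPi p = multisetParityIndex p.parts := rfl

theorem multisetParityIndex_le {s : Multiset ℕ} {m : ℕ} (hs : ∀ a ∈ s, a ≤ m) :
    multisetParityIndex s ≤ m :=
  parityChanges_le_of_pairwise m 0 _ (List.pairwise_cons.mpr
      ⟨fun _ _ => Nat.zero_le _, Multiset.pairwise_sort s _⟩)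
    (fun b hb => hs b ((Multiset.mem_sort _).mp hb))

theorem sort_add_replicate {s : Multiset ℕ} {v : ℕ} (hs : ∀ a ∈ s, a ≤ v) (c : ℕ) :
    (s + Multiset.replicate c v).sort (· ≤ ·) = s.sort (· ≤ ·) ++ List.replicate c v := by
  apply List.Perm.eq_of_pairwise' (r := (· ≤ ·))
  · exact Multiset.pairwise_sort _ _
  · refine List.pairwise_append.mpr ⟨Multiset.pairwise_sort _ _,
      List.pairwise_replicate.mpr (Or.inr le_rfl), fun a ha b hb => ?_⟩
    rw [List.eq_of_mem_replicate hb]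
    exact hs a ((Multiset.mem_sort _).mp ha)
  · rw [← Multiset.coe_eq_coe, Multiset.sort_eq, ← Multiset.coe_add, Multiset.sort_eq,
      Multiset.coe_replicate]

/-- The parity index has the parity of the largest part, so appending copies of a new largest
part `v` adds a switch exactly when that parity differs from `v`'s. -/
theorem multisetParityIndex_add_replicate {s : Multiset ℕ} {v : ℕ} (hs : ∀ a ∈ s, a ≤ v)
    (c : ℕ) : multisetParityIndex (s + Multiset.replicate (c + 1) v) =
      multisetParityIndex s + (multisetParityIndex s + v) % 2 := by
  simp only [multisetParityIndex, parityIndex, sort_add_replicate hs,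
    ← List.cons_append, parityChanges_cons_append_replicate, add_zero]

abbrev BddParts (m : ℕ) : Type := {s : Multiset ℕ // ∀ a ∈ s, 0 < a ∧ a ≤ m}

instance : Unique (BddParts 0) where
  default := ⟨0, fun _ h => absurd h (Multiset.notMem_zero _)⟩
  uniq s := Subtype.ext <| Multiset.eq_zero_of_forall_notMem fun a ha => by
    have := s.2 a ha
    omega

def bddPartsSuccEquiv (m : ℕ) : BddParts (m + 1) ≃ ℕ × BddParts m where
  toFun s := (s.1.count (m + 1), ⟨s.1.filter (· ≠ m + 1), fun a ha => by
    have h₁ := s.2 a (Multiset.mem_of_mem_filter ha)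
    have h₂ : a ≠ m + 1 := (Multiset.mem_filter.mp ha).2
    omega⟩)
  invFun p := ⟨p.2.1 + Multiset.replicate p.1 (m + 1), fun a ha => by
    rcases Multiset.mem_add.mp ha with h | h
    · have := p.2.2 a h
      omega
    · rw [Multiset.eq_of_mem_replicate h]
      omega⟩
  left_inv s := Subtype.ext <| by
    dsimp only
    rw [← Multiset.filter_eq' s.1 (m + 1), add_comm]
    simpa only [ne_eq, not_not] using Multiset.filter_add_not (· = m + 1) s.1
  right_inv := by
    rintro ⟨c, s⟩
    have hs : ∀ a ∈ s.1, a ≠ m + 1 := fun a ha => by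
      have := s.2 a ha
      omega
    refine Prod.ext ?_ (Subtype.ext ?_)
    · simp [Multiset.count_eq_zero.mpr fun h => hs _ h rfl]
    · simp only [Multiset.filter_add, Multiset.filter_eq_self.mpr hs]
      rw [Multiset.filter_eq_nil.mpr fun a ha => by simp [Multiset.eq_of_mem_replicate ha],
        add_zero]

theorem bddPartsSuccEquiv_symm_apply (m : ℕ) (p : ℕ × BddParts m) :
    ((bddPartsSuccEquiv m).symm p).1 = p.2.1 + Multiset.replicate p.1 (m + 1) := rfl

section

variable {q : ℂ}

theorem summable_norm_pow_sum (hq : ‖q‖ < 1) :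
    ∀ m, Summable fun s : BddParts m => ‖q‖ ^ s.1.sum
  | 0 => Summable.of_finite
  | m + 1 => by
    rw [← (bddPartsSuccEquiv m).symm.summable_iff]
    have hgeom := summable_geometric_of_lt_one (by positivity)
      (pow_lt_one₀ (norm_nonneg q) hq m.add_one_ne_zero)
    refine ((hgeom.mul_of_nonneg (summable_norm_pow_sum hq m) (fun _ => by positivity)
      (fun _ => by positivity))).congr fun p => ?_
    simp only [Function.comp_apply, bddPartsSuccEquiv_symm_apply, Multiset.sum_add,
      Multiset.sum_replicate, smul_eq_mul, pow_add]
    ring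

theorem summable_ite_pow_sum (hq : ‖q‖ < 1) (m : ℕ) (R : Multiset ℕ → Prop)
    [DecidablePred R] : Summable fun s : BddParts m => if R s.1 then q ^ s.1.sum else 0 :=
  (summable_norm_pow_sum hq m).of_norm_bounded fun s => by
    split_ifs <;> simp

theorem tsum_bddParts_succ (f : Multiset ℕ → ℂ) {m : ℕ}
    (hf : Summable fun s : BddParts (m + 1) => f s.1) :
    ∑' s : BddParts (m + 1), f s.1 = ∑' s : BddParts m, f s.1 +
      ∑' (c : ℕ) (s : BddParts m), f (s.1 + Multiset.replicate (c + 1) (m + 1)) := by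
  have hprod : Summable fun p : ℕ × BddParts m => f ((bddPartsSuccEquiv m).symm p).1 :=
    (bddPartsSuccEquiv m).symm.summable_iff.mpr hf
  rw [← (bddPartsSuccEquiv m).symm.tsum_eq, hprod.tsum_prod, hprod.prod.tsum_eq_zero_add]
  simp only [bddPartsSuccEquiv_symm_apply, Multiset.replicate_zero, add_zero]

noncomputable def bddPartsGF (q : ℂ) (m : ℕ) (P : ℕ → Prop) [DecidablePred P] : ℂ :=
  ∑' s : BddParts m, if P (multisetParityIndex s.1) then q ^ s.1.sum else 0

theorem bddPartsGF_congr (m : ℕ) {P Q : ℕ → Prop} [DecidablePred P] [DecidablePred Q]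
    (h : ∀ p, P p ↔ Q p) : bddPartsGF q m P = bddPartsGF q m Q := by
  simp only [bddPartsGF, h]

theorem bddPartsGF_eq_zero (m : ℕ) {P : ℕ → Prop} [DecidablePred P] (h : ∀ p, ¬P p) :
    bddPartsGF q m P = 0 := by
  simp [bddPartsGF, h]

theorem bddPartsGF_or (hq : ‖q‖ < 1) (m : ℕ) {P Q : ℕ → Prop} [DecidablePred P]
    [DecidablePred Q] (h : ∀ p, ¬(P p ∧ Q p)) :
    bddPartsGF q m (fun p => P p ∨ Q p) = bddPartsGF q m P + bddPartsGF q m Q := by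
  rw [bddPartsGF, bddPartsGF, bddPartsGF,
    ← (summable_ite_pow_sum hq m fun s => P (multisetParityIndex s)).tsum_add
      (summable_ite_pow_sum hq m fun s => Q (multisetParityIndex s))]
  refine tsum_congr fun s => ?_
  have := h (multisetParityIndex s.1)
  split_ifs <;> simp_all

theorem tsum_add_replicate (hq : ‖q‖ < 1) (m : ℕ) (P : ℕ → Prop) [DecidablePred P] :
    ∑' (c : ℕ) (s : BddParts m),
        (if P (multisetParityIndex (s.1 + Multiset.replicate (c + 1) (m + 1)))
          then q ^ (s.1 + Multiset.replicate (c + 1) (m + 1)).sum else 0) =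
      q ^ (m + 1) * (1 - q ^ (m + 1))⁻¹ *
        bddPartsGF q m (fun p => P (p + (p + (m + 1)) % 2)) := by
  have hle : ∀ s : BddParts m, ∀ a ∈ s.1, a ≤ m + 1 := fun s a ha => by
    have := s.2 a ha
    omega
  have hterm : ∀ (c : ℕ) (s : BddParts m),
      (if P (multisetParityIndex (s.1 + Multiset.replicate (c + 1) (m + 1)))
        then q ^ (s.1 + Multiset.replicate (c + 1) (m + 1)).sum else 0) =
      (q ^ (m + 1)) ^ (c + 1) * (if P (multisetParityIndex s.1 +
        (multisetParityIndex s.1 + (m + 1)) % 2) then q ^ s.1.sum else 0) := fun c s => by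
    rw [multisetParityIndex_add_replicate (hle s), Multiset.sum_add, Multiset.sum_replicate,
      smul_eq_mul, pow_add, ← pow_mul]
    split_ifs <;> ring
  have hnorm : ‖q ^ (m + 1)‖ < 1 := by
    rw [norm_pow]
    exact pow_lt_one₀ (norm_nonneg q) hq m.add_one_ne_zero
  have hgeom : ∑' c : ℕ, (q ^ (m + 1)) ^ (c + 1) = q ^ (m + 1) * (1 - q ^ (m + 1))⁻¹ := by
    generalize q ^ (m + 1) = t at hnorm ⊢
    simp only [pow_succ', tsum_mul_left, tsum_geometric_of_norm_lt_one hnorm]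
  simp only [hterm, tsum_mul_left]
  rw [tsum_mul_right, hgeom, bddPartsGF]

theorem bddPartsGF_succ (hq : ‖q‖ < 1) (m : ℕ) (P : ℕ → Prop) [DecidablePred P] :
    bddPartsGF q (m + 1) P = bddPartsGF q m P + q ^ (m + 1) * (1 - q ^ (m + 1))⁻¹ *
      bddPartsGF q m (fun p => P (p + (p + (m + 1)) % 2)) := by
  have h := tsum_bddParts_succ (fun s => if P (multisetParityIndex s) then q ^ s.sum else 0)
    (summable_ite_pow_sum hq (m + 1) fun s => P (multisetParityIndex s))
  rw [bddPartsGF, h, tsum_add_replicate hq]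
  rfl

theorem tsum_ite_mem_succ_eq_sub (hq : ‖q‖ < 1) (m : ℕ) (P : ℕ → Prop) [DecidablePred P] :
    ∑' s : BddParts (m + 1),
        (if m + 1 ∈ s.1 ∧ P (multisetParityIndex s.1) then q ^ s.1.sum else 0) =
      bddPartsGF q (m + 1) P - bddPartsGF q m P := by
  have hnot : ∀ s : BddParts m, m + 1 ∉ s.1 := fun s h => by
    have := s.2 _ h
    omega
  have hmem : ∀ (c : ℕ) (s : BddParts m), m + 1 ∈ s.1 + Multiset.replicate (c + 1) (m + 1) :=
    fun c s => Multiset.mem_add.mpr (Or.inr (Multiset.mem_replicate.mpr ⟨c.add_one_ne_zero, rfl⟩))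
  rw [bddPartsGF_succ hq m P, add_sub_cancel_left, ← tsum_add_replicate hq m P,
    tsum_bddParts_succ (fun s => if m + 1 ∈ s ∧ P (multisetParityIndex s) then q ^ s.sum
      else 0) (summable_ite_pow_sum hq _ fun s => m + 1 ∈ s ∧ P (multisetParityIndex s))]
  simp only [hnot, hmem, false_and, if_false, tsum_zero, true_and, zero_add]

theorem one_sub_ne_zero_of_norm_lt_one {z : ℂ} (hz : ‖z‖ < 1) : 1 - z ≠ 0 := fun h => by
  rw [← sub_eq_zero.mp h, norm_one] at hz
  exact lt_irrefl _ hz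

theorem one_sub_pow_ne_zero (hq : ‖q‖ < 1) {n : ℕ} (hn : n ≠ 0) : 1 - q ^ n ≠ 0 :=
  one_sub_ne_zero_of_norm_lt_one (by simpa using pow_lt_one₀ (norm_nonneg q) hq hn)

@[simp]
theorem qPoch_zero (a q : ℂ) : qPoch a q 0 = 1 := Finset.prod_range_zero _

theorem qPoch_succ (a q : ℂ) (n : ℕ) : qPoch a q (n + 1) = qPoch a q n * (1 - a * q ^ n) :=
  Finset.prod_range_succ _ n

theorem qPoch_ne_zero {a q : ℂ} (ha : ‖a‖ < 1) (hq : ‖q‖ ≤ 1) (n : ℕ) : qPoch a q n ≠ 0 :=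
  Finset.prod_ne_zero_iff.mpr fun i _ => one_sub_ne_zero_of_norm_lt_one <| by
    rw [norm_mul, norm_pow]
    exact (mul_le_of_le_one_right (norm_nonneg a) (pow_le_one₀ (norm_nonneg q) hq)).trans_lt ha

theorem qPoch_self_succ (q : ℂ) (n : ℕ) :
    qPoch q q (n + 1) = qPoch q q n * (1 - q ^ (n + 1)) := by
  rw [qPoch_succ, pow_succ']

theorem qPoch_sq_succ (q : ℂ) (n : ℕ) :
    qPoch (q ^ 2) (q ^ 2) (n + 1) = qPoch (q ^ 2) (q ^ 2) n * (1 - q ^ (2 * n + 2)) := by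
  rw [qPoch_succ, ← pow_mul, ← pow_add, add_comm, mul_comm]

theorem qPoch_self_ne_zero (hq : ‖q‖ < 1) (n : ℕ) : qPoch q q n ≠ 0 :=
  qPoch_ne_zero hq hq.le n

theorem qPoch_sq_ne_zero (hq : ‖q‖ < 1) (n : ℕ) : qPoch (q ^ 2) (q ^ 2) n ≠ 0 := by
  have h : ‖q ^ 2‖ < 1 := by
    rw [norm_pow]
    exact pow_lt_one₀ (norm_nonneg q) hq two_ne_zero
  exact qPoch_ne_zero h h.le n

theorem choose_succ_two (n : ℕ) : (n + 1).choose 2 = n.choose 2 + n := by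
  rw [Nat.choose_succ_succ, Nat.choose_one_right, add_comm]

/-- The coefficient of `x ^ i` in `∑ x ^ pi(λ) q ^ |λ|` over the partitions with parts `≤ m`. -/
noncomputable def piCoeff (q : ℂ) (m i : ℕ) : ℂ :=
  if i ≤ m then q ^ (i + 1).choose 2 / (qPoch q q i * qPoch (q ^ 2) (q ^ 2) ((m - i) / 2))
  else 0

theorem piCoeff_succ_of_mod_two_ne {m i : ℕ} (h : i % 2 ≠ (m + 1) % 2) :
    piCoeff q (m + 1) i = piCoeff q m i := by
  have hi : i ≤ m + 1 ↔ i ≤ m := by omega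
  simp only [piCoeff, hi, show (m + 1 - i) / 2 = (m - i) / 2 by omega]

theorem piCoeff_succ_zero (hq : ‖q‖ < 1) {m : ℕ} (h : (m + 1) % 2 = 0) :
    piCoeff q (m + 1) 0 =
      piCoeff q m 0 + q ^ (m + 1) * (1 - q ^ (m + 1))⁻¹ * piCoeff q m 0 := by
  obtain ⟨u, rfl⟩ : ∃ u, m = 2 * u + 1 := ⟨m / 2, by omega⟩
  have hu : (2 * u + 1 + 1 - 0) / 2 = u + 1 := by omega
  have hu' : (2 * u + 1 - 0) / 2 = u := by omega
  simp only [piCoeff, Nat.zero_le, if_true, hu, hu', qPoch_sq_succ]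
  have := qPoch_sq_ne_zero hq u
  have := one_sub_pow_ne_zero hq (show 2 * u + 2 ≠ 0 by omega)
  rw [show 2 * u + 1 + 1 = 2 * u + 2 by ring]
  field_simp
  ring

theorem piCoeff_succ_succ (hq : ‖q‖ < 1) {m j : ℕ} (h : (j + 1) % 2 = (m + 1) % 2) :
    piCoeff q (m + 1) (j + 1) = piCoeff q m (j + 1) +
      q ^ (m + 1) * (1 - q ^ (m + 1))⁻¹ * (piCoeff q m (j + 1) + piCoeff q m j) := by
  have hm := one_sub_pow_ne_zero hq (n := m + 1) (by omega)
  have hj := one_sub_pow_ne_zero hq (n := j + 1) (by omega)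
  rcases lt_trichotomy j m with hjm | rfl | hjm
  · obtain ⟨u, rfl⟩ : ∃ u, m = j + 2 * u + 2 := ⟨(m - j - 2) / 2, by omega⟩
    have hb := one_sub_pow_ne_zero hq (show 2 * u + 2 ≠ 0 by omega)
    have := qPoch_self_ne_zero hq j
    have := qPoch_sq_ne_zero hq u
    simp only [piCoeff, show j + 1 ≤ j + 2 * u + 2 + 1 by omega,
      show j + 1 ≤ j + 2 * u + 2 by omega, show j ≤ j + 2 * u + 2 by omega, if_true,
      show (j + 2 * u + 2 + 1 - (j + 1)) / 2 = u + 1 by omega,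
      show (j + 2 * u + 2 - (j + 1)) / 2 = u by omega,
      show (j + 2 * u + 2 - j) / 2 = u + 1 by omega, choose_succ_two]
    rw [qPoch_sq_succ, qPoch_self_succ, pow_add q (j.choose 2 + j),
      show j + 2 * u + 2 + 1 = (j + 1) + (2 * u + 2) by ring, pow_add q (j + 1)] at *
    generalize q ^ (j + 1) = a at *
    generalize q ^ (2 * u + 2) = b at *
    field_simp
    ring
  · have := qPoch_self_ne_zero hq j
    simp only [piCoeff, le_refl, if_true, show ¬ j + 1 ≤ j by omega, if_false, Nat.sub_self,
      Nat.zero_div, qPoch_zero, qPoch_self_succ, choose_succ_two (j + 1), pow_add]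
    field_simp
    ring
  · simp [piCoeff, show ¬ j + 1 ≤ m + 1 by omega, show ¬ j + 1 ≤ m by omega,
      show ¬ j ≤ m by omega]

theorem bddPartsGF_eq_piCoeff (hq : ‖q‖ < 1) : ∀ m i, bddPartsGF q m (· = i) = piCoeff q m i
  | 0, i => by
    rw [bddPartsGF, tsum_eq_single default fun b hb => absurd (Subsingleton.elim b default) hb,
      show (default : BddParts 0).1 = 0 from rfl]
    rcases i with _ | i <;> simp [piCoeff, multisetParityIndex, parityIndex, parityChanges]
  | m + 1, i => by
    have ih := bddPartsGF_eq_piCoeff hq m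
    rw [bddPartsGF_succ hq, ih]
    by_cases h : i % 2 = (m + 1) % 2
    · rcases i with _ | j
      · rw [bddPartsGF_congr m (Q := (· = 0)) (by omega), ih, piCoeff_succ_zero hq (by omega)]
      · rw [bddPartsGF_congr m (Q := fun p => p = j + 1 ∨ p = j) (by omega),
          bddPartsGF_or hq m (by omega), ih, ih, piCoeff_succ_succ hq h]
    · rw [bddPartsGF_eq_zero m (by omega),
        piCoeff_succ_of_mod_two_ne h, mul_zero, add_zero]

theorem piCoeff_two_mul_sub (hq : ‖q‖ < 1) {t j : ℕ} (hj : j ≤ t + 1) :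
    piCoeff q (2 * t + 1 + 1) (2 * j) - piCoeff q (2 * t + 1) (2 * j) =
      q ^ (2 * (t + 1)) * (q ^ (2 * j).choose 2 /
        (qPoch q q (2 * j) * qPoch (q ^ 2) (q ^ 2) (t + 1 - j))) := by
  have := qPoch_self_ne_zero hq (2 * j)
  rcases hj.lt_or_eq with hj | rfl
  · obtain ⟨u, hu⟩ : ∃ u, t = j + u := ⟨t - j, by omega⟩
    subst hu
    have := qPoch_sq_ne_zero hq u
    have hb := one_sub_pow_ne_zero hq (show 2 * u + 2 ≠ 0 by omega)
    simp only [piCoeff, show 2 * j ≤ 2 * (j + u) + 1 + 1 by omega,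
      show 2 * j ≤ 2 * (j + u) + 1 by omega, if_true,
      show (2 * (j + u) + 1 + 1 - 2 * j) / 2 = u + 1 by omega,
      show (2 * (j + u) + 1 - 2 * j) / 2 = u by omega, show j + u + 1 - j = u + 1 by omega,
      qPoch_sq_succ, choose_succ_two]
    rw [show 2 * (j + u + 1) = 2 * j + (2 * u + 2) by ring, pow_add q (2 * j)]
    generalize q ^ (2 * u + 2) = b at *
    field_simp
    ring
  · simp only [piCoeff, show 2 * (t + 1) ≤ 2 * t + 1 + 1 by omega, if_true,
      show ¬ 2 * (t + 1) ≤ 2 * t + 1 by omega, if_false,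
      show (2 * t + 1 + 1 - 2 * (t + 1)) / 2 = 0 by omega,
      Nat.sub_self, qPoch_zero, choose_succ_two, pow_add, sub_zero]
    field_simp

theorem sum_range_two_mul_add_one_of_odd_eq_zero {M : Type*} [AddCommMonoid M]
    (g : ℕ → M) (hg : ∀ j, g (2 * j + 1) = 0) :
    ∀ k, ∑ i ∈ Finset.range (2 * k + 1), g i = ∑ j ∈ Finset.range (k + 1), g (2 * j)
  | 0 => rfl
  | k + 1 => by
    rw [show 2 * (k + 1) + 1 = 2 * k + 1 + 1 + 1 by ring, Finset.sum_range_succ,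
      Finset.sum_range_succ, sum_range_two_mul_add_one_of_odd_eq_zero g hg k, hg,
      add_zero, Finset.sum_range_succ _ (k + 1)]
    rfl

theorem hasSum_largest_part_eq (hq : ‖q‖ < 1) (x : ℂ) (m : ℕ) :
    HasSum (fun s : BddParts (m + 1) =>
        if m + 1 ∈ s.1 then x ^ multisetParityIndex s.1 * q ^ s.1.sum else 0)
      (∑ i ∈ Finset.range (m + 2), x ^ i * (piCoeff q (m + 1) i - piCoeff q m i)) := by
  have hsplit : ∀ s : BddParts (m + 1),
      (if m + 1 ∈ s.1 then x ^ multisetParityIndex s.1 * q ^ s.1.sum else 0) =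
        ∑ i ∈ Finset.range (m + 2),
          x ^ i * if m + 1 ∈ s.1 ∧ multisetParityIndex s.1 = i then q ^ s.1.sum else 0 := by
    intro s
    have hpi : multisetParityIndex s.1 < m + 2 :=
      Nat.lt_succ_of_le (multisetParityIndex_le fun a ha => (s.2 a ha).2)
    by_cases hmem : m + 1 ∈ s.1 <;> simp [hmem, Finset.sum_ite_eq, hpi]
  simp only [hsplit]
  refine hasSum_sum fun i _ => HasSum.mul_left _ ?_
  rw [← bddPartsGF_eq_piCoeff hq, ← bddPartsGF_eq_piCoeff hq, ← tsum_ite_mem_succ_eq_sub hq]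
  exact (summable_ite_pow_sum hq _ fun s => m + 1 ∈ s ∧ multisetParityIndex s = i).hasSum

theorem sum_piCoeff_sub_eq (hq : ‖q‖ < 1) (x : ℂ) (t : ℕ) :
    ∑ i ∈ Finset.range (2 * t + 1 + 2),
        x ^ i * (piCoeff q (2 * t + 1 + 1) i - piCoeff q (2 * t + 1) i) =
      q ^ (2 * (t + 1)) * ∑ j ∈ Finset.range (t + 1 + 1), x ^ (2 * j) *
        q ^ (2 * j).choose 2 / (qPoch q q (2 * j) * qPoch (q ^ 2) (q ^ 2) (t + 1 - j)) := by
  have hodd : ∀ j, x ^ (2 * j + 1) *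
      (piCoeff q (2 * t + 1 + 1) (2 * j + 1) - piCoeff q (2 * t + 1) (2 * j + 1)) = 0 :=
    fun j => by rw [piCoeff_succ_of_mod_two_ne (by omega), sub_self, mul_zero]
  rw [show 2 * t + 1 + 2 = 2 * (t + 1) + 1 by ring,
    sum_range_two_mul_add_one_of_odd_eq_zero _ hodd, Finset.mul_sum]
  refine Finset.sum_congr rfl fun j hj => ?_
  rw [piCoeff_two_mul_sub hq (Nat.lt_succ_iff.mp (Finset.mem_range.mp hj))]
  ring

theorem hasSum_partitions {α : Type*} [AddCommMonoid α] [TopologicalSpace α] [ContinuousAdd α]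
    [RegularSpace α] {f : Multiset ℕ → α} {m : ℕ} {a : α}
    (hf : ∀ s, f s ≠ 0 → ∀ b ∈ s, b ≤ m) (h : HasSum (fun s : BddParts m => f s.1) a) :
    HasSum (fun n : ℕ => ∑ p : n.Partition, f p.parts) a := by
  let g : BddParts m → Σ n : ℕ, n.Partition := fun s =>
    ⟨s.1.sum, ⟨s.1, fun hb => (s.2 _ hb).1, rfl⟩⟩
  have hg : g.Injective := fun s s' hss' =>
    Subtype.ext (congrArg (fun σ : Σ n : ℕ, n.Partition => σ.2.parts) hss')
  have hrange : ∀ σ ∉ Set.range g, f σ.2.parts = 0 := by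
    rintro ⟨n, ⟨parts, hpos, rfl⟩⟩ hσ
    by_contra hne
    exact hσ ⟨⟨parts, fun b hb => ⟨hpos hb, hf parts hne b hb⟩⟩, rfl⟩
  exact ((hg.hasSum_iff (f := fun σ : Σ n : ℕ, n.Partition => f σ.2.parts) hrange).mp h).sigma
    fun n => hasSum_fintype _

end

theorem stmt13 (k : ℕ) (hk : 1 ≤ k) (x q : ℂ) (hq : ‖q‖ < 1) :
    ∑' n : ℕ, ∑ p ∈ Finset.univ.filter
        (fun p : n.Partition => 2 * k ∈ p.parts ∧ ∀ a ∈ p.parts, a ≤ 2 * k),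
        x ^ partPi p * q ^ n =
    q ^ (2 * k) * ∑ j ∈ Finset.range (k + 1),
        x ^ (2 * j) * q ^ Nat.choose (2 * j) 2 /
        (qPoch q q (2 * j) * qPoch (q ^ 2) (q ^ 2) (k - j)) := by
  obtain ⟨t, rfl⟩ : ∃ t, k = t + 1 := ⟨k - 1, by omega⟩
  set F : Multiset ℕ → ℂ := fun s =>
    if 2 * (t + 1) ∈ s ∧ ∀ a ∈ s, a ≤ 2 * (t + 1) then x ^ multisetParityIndex s * q ^ s.sum
    else 0
  have htop := hasSum_largest_part_eq hq x (2 * t + 1)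
  rw [sum_piCoeff_sub_eq hq, show 2 * t + 1 + 1 = 2 * (t + 1) by ring] at htop
  have hF : (fun s : BddParts (2 * (t + 1)) => F s.1) =
      fun s => if 2 * (t + 1) ∈ s.1 then x ^ multisetParityIndex s.1 * q ^ s.1.sum else 0 :=
    funext fun s => by simp only [F, and_iff_left fun a ha => (s.2 a ha).2]
  rw [← hF] at htop
  rw [← (hasSum_partitions (fun s hs => (of_not_not fun h => hs (if_neg h)).2) htop).tsum_eq]
  refine tsum_congr fun n => ?_
  rw [Finset.sum_filter]
  refine Finset.sum_congr rfl fun p _ => ?_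
  simp only [F, partPi_eq, p.parts_sum]

end SolPaper
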